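/- arXiv:1303.5293 — 2 statements merged into one kernel-verified Lean document; each statement's English description precedes it below -/
import Mathlib

section
/- The cyclic partial derivatives of the superpotential w satisfy ∂_z(w) = −r and ∂_{x_k}(w) = Σ_{j=1}^n m_kj r_j for k = 1,…,n; consequently, since M is invertible, the two-sided ideal of T(V̂) generated by {∂_{x_i}(w) : i = 0,1,…,n} (where x_0 = z) equals the ideal ⟨r, r_1,…,r_n⟩, and hence A[z;δ̄] ≅ T(V̂)/⟨∂_{x_i}(w) : i = 0,…,n⟩. -/
/-!
STATEMENT 3: The cyclic partial derivatives of the superpotential w satisfy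
∂_z(w) = −r and ∂_{x_k}(w) = Σ_j m_kj r_j; consequently the two-sided ideal of
T(V̂) generated by the ∂_{x_i}(w) (x_0 = z) equals ⟨r, r₁,…,r_n⟩, and hence
A[z;δ̄] ≅ T(V̂)/⟨∂_{x_i}(w) : i = 0,…,n⟩.
-/

open TensorProduct Matrix

noncomputable section

variable (k : Type) [Field k] (n : ℕ)

/-- The standard basis of `V = k^n`. -/
def x (i : Fin n) : Fin n → k := Pi.single i 1

/-- `V̂ = V ⊕ k·z`. -/
abbrev Vhat (k : Type) [Field k] (n : ℕ) := (Fin n → k) × k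

/-- The inclusion `V → V̂`. -/
def inc : (Fin n → k) →ₗ[k] Vhat k n := LinearMap.inl k (Fin n → k) k

/-- The extra degree-one generator `z ∈ V̂`. -/
def zv : Vhat k n := (0, 1)

/-- The basis vector `x_i` seen in `V̂`. -/
def xh (i : Fin n) : Vhat k n := inc k n (x k n i)

/-- The multiplication embedding `V ⊗ V → T(V)`. -/
def embV : (Fin n → k) ⊗[k] (Fin n → k) →ₗ[k] TensorAlgebra k (Fin n → k) :=
  LinearMap.mul' k (TensorAlgebra k (Fin n → k)) ∘ₗ
    TensorProduct.map (TensorAlgebra.ι k) (TensorAlgebra.ι k)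

variable (M : Matrix (Fin n) (Fin n) k)

/-- The relation `r = Σ m_ij x_i ⊗ x_j` as an element of `T(V)`. -/
def rTV : TensorAlgebra k (Fin n → k) :=
  ∑ i : Fin n, ∑ j : Fin n,
    M i j • (TensorAlgebra.ι k (x k n i) * TensorAlgebra.ι k (x k n j))

/-- `r` as an element of `V̂ ⊗ V̂`. -/
def rT2 : Vhat k n ⊗[k] Vhat k n :=
  ∑ i : Fin n, ∑ j : Fin n, M i j • (xh k n i ⊗ₜ xh k n j)

variable (δ₀ : (Fin n → k) →ₗ[k] (Fin n → k) ⊗[k] (Fin n → k))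

/-- `r_i = z⊗x_i − x_i⊗z − δ(x_i)` as an element of `V̂ ⊗ V̂`. -/
def r2 (i : Fin n) : Vhat k n ⊗[k] Vhat k n :=
  zv k n ⊗ₜ xh k n i - xh k n i ⊗ₜ zv k n
    - TensorProduct.map (inc k n) (inc k n) (δ₀ (x k n i))

/-- The candidate superpotential `w = −z⊗r + Σ_{i,j} m_ij x_i⊗r_j`. -/
def w : Vhat k n ⊗[k] (Vhat k n ⊗[k] Vhat k n) :=
  -(zv k n ⊗ₜ rT2 k n M)
    + ∑ i : Fin n, ∑ j : Fin n, M i j • (xh k n i ⊗ₜ r2 k n δ₀ j)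

/-- Left contraction `(α⊗1⊗1) : V̂⊗(V̂⊗V̂) → V̂⊗V̂`. -/
def lc (α : Module.Dual k (Vhat k n)) :
    Vhat k n ⊗[k] (Vhat k n ⊗[k] Vhat k n) →ₗ[k] Vhat k n ⊗[k] Vhat k n :=
  (TensorProduct.lid k (Vhat k n ⊗[k] Vhat k n)).toLinearMap ∘ₗ
    TensorProduct.map α LinearMap.id

/-- The relations of `B = T(V̂)/⟨r, r₁, …, r_n⟩`. -/
def emb2 : (Vhat k n) ⊗[k] (Vhat k n) →ₗ[k] TensorAlgebra k (Vhat k n) :=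
  LinearMap.mul' k (TensorAlgebra k (Vhat k n)) ∘ₗ
    TensorProduct.map (TensorAlgebra.ι k) (TensorAlgebra.ι k)

/-- The defining relations of `B = T(V̂)/⟨r, r₁, …, r_n⟩`. -/
def OreRel (a b : TensorAlgebra k (Vhat k n)) : Prop :=
  (a = emb2 k n (rT2 k n M) ∨ ∃ i : Fin n, a = emb2 k n (r2 k n δ₀ i)) ∧ b = 0

/-- `B = A[z;δ̄] ≅ T(V̂)/⟨r, r₁, …, r_n⟩`. -/
abbrev B := RingQuot (OreRel k n M δ₀)

/-- The coordinate functional `z* ∈ V̂*`. -/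
def zstar : Module.Dual k (Vhat k n) := LinearMap.snd k (Fin n → k) k

/-- The coordinate functional `x_i* ∈ V̂*`. -/
def xstar (i : Fin n) : Module.Dual k (Vhat k n) :=
  LinearMap.proj i ∘ₗ LinearMap.fst k (Fin n → k) k

/-- The defining relations coming from the cyclic partial derivatives of `w`. -/
def PartialRel (a b : TensorAlgebra k (Vhat k n)) : Prop :=
  (a = emb2 k n (lc k n (zstar k n) (w k n M δ₀))
      ∨ ∃ i : Fin n, a = emb2 k n (lc k n (xstar k n i) (w k n M δ₀))) ∧ b = 0

/-! ### Auxiliary lemmas -/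

lemma lc_tmul (α : Module.Dual k (Vhat k n)) (a : Vhat k n)
    (t : Vhat k n ⊗[k] Vhat k n) : lc k n α (a ⊗ₜ t) = α a • t := by
  simp [lc]

lemma lc_neg_tmul (α : Module.Dual k (Vhat k n)) (a : Vhat k n)
    (t : Vhat k n ⊗[k] Vhat k n) :
    lc k n α (-(a ⊗ₜ t)) = -(α a • t) := by
  simp only [lc, LinearMap.coe_comp, LinearEquiv.coe_coe, Function.comp_apply]
  rw [← neg_one_smul k (a ⊗ₜ t), LinearMap.map_smul, LinearEquiv.map_smul]
  simp

lemma zstar_zv : zstar k n (zv k n) = 1 := rfl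

lemma zstar_xh (i : Fin n) : zstar k n (xh k n i) = 0 := rfl

lemma xstar_zv (i : Fin n) : xstar k n i (zv k n) = 0 := rfl

lemma xstar_xh (i p : Fin n) :
    xstar k n i (xh k n p) = if i = p then 1 else 0 := by
  simp [xstar, xh, inc, x, Pi.single_apply]

lemma part1 : lc k n (zstar k n) (w k n M δ₀) = -(rT2 k n M) := by
  simp only [w, map_add, LinearMap.map_neg, map_sum, _root_.map_smul, lc_neg_tmul, lc_tmul,
    zstar_zv, zstar_xh, one_smul, zero_smul, smul_zero, Finset.sum_const_zero,
    add_zero]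

lemma part2 (i : Fin n) :
    lc k n (xstar k n i) (w k n M δ₀) = ∑ j : Fin n, M i j • r2 k n δ₀ j := by
  simp only [w, map_add, LinearMap.map_neg, map_sum, _root_.map_smul, lc_neg_tmul, lc_tmul,
    xstar_zv, xstar_xh, zero_smul, neg_zero, zero_add, ite_smul, one_smul,
    smul_ite, smul_zero, Finset.sum_ite_irrel, Finset.sum_const_zero,
    Finset.sum_ite_eq, Finset.mem_univ, if_true]

lemma inv_recover {E : Type} [AddCommGroup E] [Module k E]
    (hM : IsUnit M.det) (v : Fin n → E) (i : Fin n) :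
    ∑ j : Fin n, M⁻¹ i j • (∑ l : Fin n, M j l • v l) = v i := by
  simp_rw [Finset.smul_sum, smul_smul]
  rw [Finset.sum_comm]
  have h : ∀ l : Fin n, ∑ j : Fin n, (M⁻¹ i j * M j l) • v l
      = ((M⁻¹ * M) i l) • v l := by
    intro l; rw [Matrix.mul_apply, Finset.sum_smul]
  simp_rw [h, Matrix.nonsing_inv_mul M hM, Matrix.one_apply, ite_smul, one_smul,
    zero_smul]
  simp

lemma span_le'' {R : Type*} [NonUnitalNonAssocRing R] {s : Set R}
    {I : TwoSidedIdeal R} (h : s ⊆ I) : TwoSidedIdeal.span s ≤ I :=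
  fun _ hx => TwoSidedIdeal.mem_span_iff.mp hx I h

theorem partial_derivatives_of_w
    (hM : IsUnit M.det) (hMat : Mᵀ = -M)
    (δ : TensorAlgebra k (Fin n → k) →ₗ[k] TensorAlgebra k (Fin n → k))
    (hLeib : ∀ a b, δ (a * b) = δ a * b + a * δ b)
    (hδι : ∀ v : Fin n → k, δ (TensorAlgebra.ι k v) = embV k n (δ₀ v))
    (hδr : δ (rTV k n M) = 0) :
    -- ∂_z(w) = −r
    lc k n (zstar k n) (w k n M δ₀) = -(rT2 k n M)
    -- ∂_{x_k}(w) = Σ_j m_kj r_j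
    ∧ (∀ i : Fin n,
        lc k n (xstar k n i) (w k n M δ₀)
          = ∑ j : Fin n, M i j • r2 k n δ₀ j)
    -- ⟨∂_{x_i}(w) : i = 0,…,n⟩ = ⟨r, r₁, …, r_n⟩ in T(V̂)
    ∧ TwoSidedIdeal.span
        (insert (emb2 k n (lc k n (zstar k n) (w k n M δ₀)))
          {t | ∃ i : Fin n, t = emb2 k n (lc k n (xstar k n i) (w k n M δ₀))})
      = TwoSidedIdeal.span
        (insert (emb2 k n (rT2 k n M))
          {t | ∃ i : Fin n, t = emb2 k n (r2 k n δ₀ i)})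
    -- hence A[z;δ̄] ≅ T(V̂)/⟨∂_{x_i}(w)⟩
    ∧ Nonempty (B k n M δ₀ ≃ₐ[k] RingQuot (PartialRel k n M δ₀)) := by
  have h1 := part1 k n M δ₀
  have h2 := part2 k n M δ₀
  -- r2 i recovered from the partial derivatives via M⁻¹
  have hrec : ∀ i : Fin n,
      r2 k n δ₀ i = ∑ j : Fin n, M⁻¹ i j • lc k n (xstar k n j) (w k n M δ₀) := by
    intro i
    simp_rw [h2]
    exact (inv_recover k n M hM (r2 k n δ₀) i).symm
  -- ideal equality
  have hspan : TwoSidedIdeal.span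
        (insert (emb2 k n (lc k n (zstar k n) (w k n M δ₀)))
          {t | ∃ i : Fin n, t = emb2 k n (lc k n (xstar k n i) (w k n M δ₀))})
      = TwoSidedIdeal.span
        (insert (emb2 k n (rT2 k n M))
          {t | ∃ i : Fin n, t = emb2 k n (r2 k n δ₀ i)}) := by
    apply le_antisymm
    · apply span_le''
      rintro t (rfl | ⟨i, rfl⟩)
      · rw [h1, map_neg]
        exact TwoSidedIdeal.neg_mem _
          (TwoSidedIdeal.subset_span (Set.mem_insert _ _))
      · rw [h2, map_sum]
        refine sum_mem fun j _ => ?_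
        rw [_root_.map_smul, Algebra.smul_def]
        exact TwoSidedIdeal.mul_mem_left _ _ _
          (TwoSidedIdeal.subset_span (Set.mem_insert_of_mem _ ⟨j, rfl⟩))
    · apply span_le''
      rintro t (rfl | ⟨i, rfl⟩)
      · have : emb2 k n (rT2 k n M)
            = -(emb2 k n (lc k n (zstar k n) (w k n M δ₀))) := by
          rw [h1, map_neg, neg_neg]
        rw [this]
        exact TwoSidedIdeal.neg_mem _
          (TwoSidedIdeal.subset_span (Set.mem_insert _ _))
      · rw [hrec i, map_sum]
        refine sum_mem fun j _ => ?_
        rw [_root_.map_smul, Algebra.smul_def]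
        exact TwoSidedIdeal.mul_mem_left _ _ _
          (TwoSidedIdeal.subset_span (Set.mem_insert_of_mem _ ⟨j, rfl⟩))
  -- the algebra isomorphism
  have hiso : Nonempty (B k n M δ₀ ≃ₐ[k] RingQuot (PartialRel k n M δ₀)) := by
    -- the partial-derivative relations vanish in B
    have hOrez : RingQuot.mkAlgHom k (OreRel k n M δ₀)
        (emb2 k n (lc k n (zstar k n) (w k n M δ₀))) = 0 := by
      rw [h1, map_neg, map_neg]
      have := RingQuot.mkAlgHom_rel k
        (show OreRel k n M δ₀ (emb2 k n (rT2 k n M)) 0 from ⟨Or.inl rfl, rfl⟩)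
      rw [map_zero] at this
      rw [this, neg_zero]
    have hOrex : ∀ i : Fin n, RingQuot.mkAlgHom k (OreRel k n M δ₀)
        (emb2 k n (lc k n (xstar k n i) (w k n M δ₀))) = 0 := by
      intro i
      rw [h2, map_sum, map_sum]
      refine Finset.sum_eq_zero fun j _ => ?_
      rw [_root_.map_smul, _root_.map_smul]
      have := RingQuot.mkAlgHom_rel k
        (show OreRel k n M δ₀ (emb2 k n (r2 k n δ₀ j)) 0 from ⟨Or.inr ⟨j, rfl⟩, rfl⟩)
      rw [map_zero] at this
      rw [this, smul_zero]
    -- the Ore relations vanish in the partial-derivative quotient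
    have hPz : RingQuot.mkAlgHom k (PartialRel k n M δ₀)
        (emb2 k n (lc k n (zstar k n) (w k n M δ₀))) = 0 := by
      have := RingQuot.mkAlgHom_rel k
        (show PartialRel k n M δ₀
          (emb2 k n (lc k n (zstar k n) (w k n M δ₀))) 0 from ⟨Or.inl rfl, rfl⟩)
      rwa [map_zero] at this
    have hPx : ∀ i : Fin n, RingQuot.mkAlgHom k (PartialRel k n M δ₀)
        (emb2 k n (lc k n (xstar k n i) (w k n M δ₀))) = 0 := by
      intro i
      have := RingQuot.mkAlgHom_rel k
        (show PartialRel k n M δ₀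
          (emb2 k n (lc k n (xstar k n i) (w k n M δ₀))) 0 from
          ⟨Or.inr ⟨i, rfl⟩, rfl⟩)
      rwa [map_zero] at this
    have hPr : RingQuot.mkAlgHom k (PartialRel k n M δ₀)
        (emb2 k n (rT2 k n M)) = 0 := by
      have : emb2 k n (rT2 k n M)
          = -(emb2 k n (lc k n (zstar k n) (w k n M δ₀))) := by
        rw [h1, map_neg, neg_neg]
      rw [this, map_neg, hPz, neg_zero]
    have hPr2 : ∀ i : Fin n, RingQuot.mkAlgHom k (PartialRel k n M δ₀)
        (emb2 k n (r2 k n δ₀ i)) = 0 := by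
      intro i
      rw [hrec i, map_sum, map_sum]
      refine Finset.sum_eq_zero fun j _ => ?_
      rw [_root_.map_smul, _root_.map_smul, hPx j, smul_zero]
    -- forward map
    have hfwd : ∀ ⦃a b : TensorAlgebra k (Vhat k n)⦄, OreRel k n M δ₀ a b →
        RingQuot.mkAlgHom k (PartialRel k n M δ₀) a
          = RingQuot.mkAlgHom k (PartialRel k n M δ₀) b := by
      rintro a b ⟨(rfl | ⟨i, rfl⟩), rfl⟩
      · rw [map_zero, hPr]
      · rw [map_zero, hPr2 i]
    have hbwd : ∀ ⦃a b : TensorAlgebra k (Vhat k n)⦄, PartialRel k n M δ₀ a b →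
        RingQuot.mkAlgHom k (OreRel k n M δ₀) a
          = RingQuot.mkAlgHom k (OreRel k n M δ₀) b := by
      rintro a b ⟨(rfl | ⟨i, rfl⟩), rfl⟩
      · rw [map_zero, hOrez]
      · rw [map_zero, hOrex i]
    refine ⟨AlgEquiv.ofAlgHom
      (RingQuot.liftAlgHom k ⟨RingQuot.mkAlgHom k (PartialRel k n M δ₀), hfwd⟩)
      (RingQuot.liftAlgHom k ⟨RingQuot.mkAlgHom k (OreRel k n M δ₀), hbwd⟩)
      ?_ ?_⟩
    · apply RingQuot.ringQuot_ext'
      refine AlgHom.ext fun a => ?_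
      simp [RingQuot.liftAlgHom_mkAlgHom_apply]
    · apply RingQuot.ringQuot_ext'
      refine AlgHom.ext fun a => ?_
      simp [RingQuot.liftAlgHom_mkAlgHom_apply]
  exact ⟨h1, h2, hspan, hiso⟩

end
end

section
/- For Smith's octonion derivation δ on the free algebra k⟨x_1,…,x_6⟩, one has δ(r) = 0, where r = x_1x_6 − x_2x_5 − x_3x_4 + x_4x_3 + x_5x_2 − x_6x_1. -/
/-!
STATEMENT 16: For Smith's octonion derivation δ on the free algebra k⟨x_1,…,x_6⟩,
one has δ(r) = 0, where r = x₁x₆ − x₂x₅ − x₃x₄ + x₄x₃ + x₅x₂ − x₆x₁.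
-/

open FreeAlgebra

theorem smith_derivation_kills_r
    (k : Type*) [Field k]
    (δ : FreeAlgebra k (Fin 6) →ₗ[k] FreeAlgebra k (Fin 6))
    (hLeib : ∀ a b : FreeAlgebra k (Fin 6), δ (a * b) = δ a * b + a * δ b)
    (x : Fin 6 → FreeAlgebra k (Fin 6))
    (hx : ∀ i, x i = FreeAlgebra.ι k i)
    (h1 : δ (x 0) = x 3 * x 1 - x 1 * x 3 + x 2 * x 4 - x 4 * x 2)
    (h2 : δ (x 1) = x 0 * x 3 - x 3 * x 0 + x 2 * x 5 - x 5 * x 2)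
    (h3 : δ (x 2) = x 4 * x 0 - x 0 * x 4 + x 5 * x 1 - x 1 * x 5)
    (h4 : δ (x 3) = x 1 * x 0 - x 0 * x 1 + x 4 * x 5 - x 5 * x 4)
    (h5 : δ (x 4) = x 0 * x 2 - x 2 * x 0 + x 5 * x 3 - x 3 * x 5)
    (h6 : δ (x 5) = x 1 * x 2 - x 2 * x 1 + x 3 * x 4 - x 4 * x 3) :
    δ (x 0 * x 5 - x 1 * x 4 - x 2 * x 3 + x 3 * x 2 + x 4 * x 1 - x 5 * x 0) = 0 := by
  simp only [map_sub, map_add, hLeib, h1, h2, h3, h4, h5, h6]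
  noncomm_ring
end
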